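/- Let p,q ∈ ℕ with p, q ≥ 1, Σ ∈ S⁺ₙ, and let D be the differential at Σ of the map f_{q/p}(Σ) = Σ^{q/p}, characterized by ∑_{i=0}^{p-1} (Σ^{q/p})^{p-1-i} (DX) (Σ^{q/p})^{i} = ∑_{j=0}^{q-1} Σ^{q-1-j} X Σ^{j}. Then tr(Σ^{-q/p}·DX) = (q/p)·tr(Σ⁻¹X) for every symmetric X. Consequently f_{q/p} preserves the half-space condition tr(Σ⁻¹X) ≥ 0. -/

import Mathlib

/-!
Multiplying the defining equation of `D X` on the left by `S^{-q} = (S^{-q/p})^p` and taking traces,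
cyclicity collapses each of the `p` terms on the left to `tr(S^{-q/p} D X)` and each of the `q`
terms on the right to `tr(S⁻¹ X)`, so `p · tr(S^{-q/p} D X) = q · tr(S⁻¹ X)`.
-/

open Matrix Classical

/-- Real power of a symmetric (Hermitian) real matrix via its spectral
decomposition (junk value `0` otherwise). -/
noncomputable def matRpow {n : ℕ} (A : Matrix (Fin n) (Fin n) ℝ) (r : ℝ) :
    Matrix (Fin n) (Fin n) ℝ :=
  if h : A.IsHermitian then
    (h.eigenvectorUnitary : Matrix (Fin n) (Fin n) ℝ) *
      Matrix.diagonal (fun i => (h.eigenvalues i) ^ r) *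
      (star (h.eigenvectorUnitary : Matrix (Fin n) (Fin n) ℝ))
  else 0

namespace Matrix

theorem trace_pow_mul_sum_pow_mul_mul_pow {ι R : Type*} [Fintype ι] [DecidableEq ι] [CommRing R]
    {A B : Matrix ι ι R} (hAB : A * B = 1) (hBA : B * A = 1) (m : ℕ) (Y : Matrix ι ι R) :
    (B ^ m * ∑ i ∈ Finset.range m, A ^ (m - 1 - i) * Y * A ^ i).trace = m * (B * Y).trace := by
  rw [Finset.mul_sum, trace_sum]
  have hterm : ∀ i ∈ Finset.range m,
      (B ^ m * (A ^ (m - 1 - i) * Y * A ^ i)).trace = (B * Y).trace := by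
    intro i hi
    have hsplit : B ^ m = B ^ i * B * B ^ (m - 1 - i) := by
      rw [← pow_succ, ← pow_add]
      congr 1
      rw [Finset.mem_range] at hi
      omega
    have hconj : A ^ i * B ^ m * A ^ (m - 1 - i) = B := by
      rw [hsplit]
      simp only [mul_assoc]
      rw [← mul_assoc (A ^ i), pow_mul_pow_eq_one i hAB, one_mul, pow_mul_pow_eq_one _ hBA,
        mul_one]
    calc (B ^ m * (A ^ (m - 1 - i) * Y * A ^ i)).trace
        = (A ^ i * (B ^ m * A ^ (m - 1 - i) * Y)).trace := by
          rw [trace_mul_comm (A ^ i)]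
          simp only [mul_assoc]
      _ = (B * Y).trace := by rw [← mul_assoc, ← mul_assoc, hconj]
  rw [Finset.sum_congr rfl hterm, Finset.sum_const, Finset.card_range, nsmul_eq_mul]

end Matrix

section matRpow

variable {n : ℕ} {S : Matrix (Fin n) (Fin n) ℝ}

lemma matRpow_of_isHermitian (h : S.IsHermitian) (r : ℝ) :
    matRpow S r = (h.eigenvectorUnitary : Matrix (Fin n) (Fin n) ℝ) *
      diagonal (fun i => (h.eigenvalues i) ^ r) *
      (star (h.eigenvectorUnitary : Matrix (Fin n) (Fin n) ℝ)) := by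
  rw [matRpow, dif_pos h]

lemma matRpow_zero (h : S.IsHermitian) : matRpow S 0 = 1 := by
  simp only [matRpow_of_isHermitian h, Real.rpow_zero, diagonal_one, mul_one]
  exact Unitary.coe_mul_star_self _

lemma matRpow_one (h : S.IsHermitian) : matRpow S 1 = S := by
  rw [matRpow_of_isHermitian h]
  conv_rhs => rw [h.spectral_theorem]
  simp [Real.rpow_one]

lemma matRpow_add (hS : S.PosDef) (a b : ℝ) :
    matRpow S (a + b) = matRpow S a * matRpow S b := by
  have h := hS.1
  simp only [matRpow_of_isHermitian h]
  set U : Matrix (Fin n) (Fin n) ℝ := h.eigenvectorUnitary.val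
  have hU : star U * U = 1 := Unitary.coe_star_mul_self _
  have hdiag : diagonal (fun i => h.eigenvalues i ^ (a + b)) =
      diagonal (fun i => h.eigenvalues i ^ a) * diagonal (fun i => h.eigenvalues i ^ b) := by
    rw [diagonal_mul_diagonal]
    congr 1
    funext i
    exact Real.rpow_add (hS.eigenvalues_pos i) a b
  rw [hdiag]
  simp only [mul_assoc]
  rw [← mul_assoc (star U) U, hU, one_mul]

lemma matRpow_mul_natCast (hS : S.PosDef) (r : ℝ) (k : ℕ) :
    matRpow S (r * k) = matRpow S r ^ k := by
  induction k with
  | zero => simp [matRpow_zero hS.1]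
  | succ k ih => rw [Nat.cast_succ, mul_add_one, matRpow_add hS, ih, pow_succ]

lemma matRpow_mul_matRpow_neg (hS : S.PosDef) (r : ℝ) : matRpow S r * matRpow S (-r) = 1 := by
  rw [← matRpow_add hS, add_neg_cancel, matRpow_zero hS.1]

lemma matRpow_neg_one (hS : S.PosDef) : matRpow S (-1) = S⁻¹ := by
  refine (inv_eq_right_inv ?_).symm
  simpa only [matRpow_one hS.1] using matRpow_mul_matRpow_neg hS 1

end matRpow

theorem stmt14_general (n : ℕ) (p q : ℕ) (hp : 1 ≤ p)
    (S : Matrix (Fin n) (Fin n) ℝ) (hS : S.PosDef)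
    (D : Matrix (Fin n) (Fin n) ℝ → Matrix (Fin n) (Fin n) ℝ)
    (hD : ∀ X : Matrix (Fin n) (Fin n) ℝ, X.IsSymm →
      ∑ i ∈ Finset.range p,
        (matRpow S ((q : ℝ) / p)) ^ (p - 1 - i) * D X *
          (matRpow S ((q : ℝ) / p)) ^ i =
      ∑ j ∈ Finset.range q, S ^ (q - 1 - j) * X * S ^ j) :
    ∀ X : Matrix (Fin n) (Fin n) ℝ, X.IsSymm →
      (matRpow S (-((q : ℝ) / p)) * D X).trace = ((q : ℝ) / p) * (S⁻¹ * X).trace ∧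
      (0 ≤ (S⁻¹ * X).trace → 0 ≤ (matRpow S (-((q : ℝ) / p)) * D X).trace) := by
  intro X hX
  have hp0 : (p : ℝ) ≠ 0 := Nat.cast_ne_zero.mpr (by omega)
  set c : ℝ := (q : ℝ) / p
  have hpow : matRpow S (-c) ^ p = S⁻¹ ^ q := by
    rw [← matRpow_mul_natCast hS, ← matRpow_neg_one hS, ← matRpow_mul_natCast hS]
    congr 1
    rw [neg_mul, div_mul_cancel₀ _ hp0, neg_one_mul]
  have key := congrArg (fun M => (S⁻¹ ^ q * M).trace) (hD X hX)
  have hSdet : IsUnit S.det := (isUnit_iff_isUnit_det S).mp hS.isUnit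
  rw [trace_pow_mul_sum_pow_mul_mul_pow (mul_nonsing_inv S hSdet) (nonsing_inv_mul S hSdet),
    ← hpow,
    trace_pow_mul_sum_pow_mul_mul_pow (matRpow_mul_matRpow_neg hS c)
      (by simpa using matRpow_mul_matRpow_neg hS (-c))] at key
  have hmain : (matRpow S (-c) * D X).trace = c * (S⁻¹ * X).trace := by
    rw [div_mul_eq_mul_div, eq_div_iff hp0, ← key]
    ring
  exact ⟨hmain, fun h => hmain ▸ mul_nonneg (by positivity) h⟩

/-- If `D` is the differential at S of `f_{q/p}(S) = S^{q/p}`,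
characterized by `∑_{i=0}^{p-1} (S^{q/p})^{p-1-i} (DX) (S^{q/p})^{i}
= ∑_{j=0}^{q-1} S^{q-1-j} X S^{j}`, then
`tr(S^{-q/p}·DX) = (q/p)·tr(S⁻¹X)` for every symmetric X; consequently
`f_{q/p}` preserves the half-space condition `tr(S⁻¹X) ≥ 0`. -/
theorem stmt14 (n : ℕ) (p q : ℕ) (hp : 1 ≤ p) (hq : 1 ≤ q)
    (S : Matrix (Fin n) (Fin n) ℝ) (hS : S.PosDef)
    (D : Matrix (Fin n) (Fin n) ℝ → Matrix (Fin n) (Fin n) ℝ)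
    (hD : ∀ X : Matrix (Fin n) (Fin n) ℝ, X.IsSymm →
      ∑ i ∈ Finset.range p,
        (matRpow S ((q : ℝ) / p)) ^ (p - 1 - i) * D X *
          (matRpow S ((q : ℝ) / p)) ^ i =
      ∑ j ∈ Finset.range q, S ^ (q - 1 - j) * X * S ^ j) :
    ∀ X : Matrix (Fin n) (Fin n) ℝ, X.IsSymm →
      (matRpow S (-((q : ℝ) / p)) * D X).trace = ((q : ℝ) / p) * (S⁻¹ * X).trace ∧
      (0 ≤ (S⁻¹ * X).trace → 0 ≤ (matRpow S (-((q : ℝ) / p)) * D X).trace) :=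
  stmt14_general n p q hp S hS D hD
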